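/- arXiv:2212.08191 — 2 statements merged into one kernel-verified Lean document; each statement's English description precedes it below -/
import Mathlib

section
/- Let S be an Enriques surface and L an effective divisor on S with L^2 > 0. Then the phi-invariant of L is at most the length of L, i.e. φ(L) ≤ l(L). -/
/-!
Intersecting the presentation `L = ∑ aᵢ Eᵢ + a₀ E₉,₁₀ + ε K` with `E 7`, whose coefficient
vanishes, counts its summands, since `E 7` meets every other `Eᵢ` and `E₉,₁₀` once and `K` is
numerically trivial: `φ(L) ≤ E 7 · L = ∑ aᵢ + a₀`. The presentation also writes `L` as a sum of
that many effective isotropic classes. When `ε = 1` there is at least one summand (otherwise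
`L ≡ K` and `L² = 0`), and `K` is absorbed into one of them, `E` becoming `E + K`, which is
still effective and isotropic.
-/

namespace Multiset

theorem exists_card_eq_sum_eq_add_of_ne_zero {M : Type*} [AddCommMonoid M] {P : M → Prop}
    {m : Multiset M} (hm : m ≠ 0) {K : M} (hP : ∀ x ∈ m, P x) (hPK : ∀ x ∈ m, P (x + K)) :
    ∃ m' : Multiset M, (∀ x ∈ m', P x) ∧ m'.sum = m.sum + K ∧ card m' = card m := by
  classical
  obtain ⟨x, hx⟩ := exists_mem_of_ne_zero hm
  refine ⟨(x + K) ::ₘ m.erase x, ?_, ?_, ?_⟩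
  · intro y hy
    rcases mem_cons.1 hy with rfl | hy
    exacts [hPK x hx, hP y (mem_of_mem_erase hy)]
  · rw [sum_cons, ← sum_erase hx]
    abel
  · rw [card_cons, card_erase_add_one hx]

theorem card_le_of_isGreatest {M : Type*} [AddCommMonoid M] {P : M → Prop} {L : M}
    {n : ℕ} (h : IsGreatest {l : ℕ | ∃ E : Fin l → M, (∀ i, P (E i)) ∧ L = ∑ i, E i} n)
    {m : Multiset M} (hP : ∀ x ∈ m, P x) (hm : m.sum = L) : card m ≤ n := by
  rw [← length_toList]
  refine h.2 ⟨fun i => m.toList[i.1], fun i => hP _ (mem_toList.1 (List.getElem_mem _)), ?_⟩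
  rw [Fin.sum_univ_getElem, sum_toList, hm]

end Multiset

theorem AddMonoidHom.map_sum_nsmul_eq_sum {M ι : Type*} [AddCommMonoid M] [Fintype ι]
    [DecidableEq ι] (φ : M →+ ℤ) {f : ι → M} {j : ι} (hf : ∀ i, i ≠ j → φ (f i) = 1)
    {c : ι → ℕ} (hc : c j = 0) : φ (∑ i, c i • f i) = ∑ i, c i := by
  rw [map_sum]
  push_cast
  refine Finset.sum_congr rfl fun i _ => ?_
  by_cases hij : i = j
  · simp [hij, hc]
  · simp [hf i hij]

section IntersectionForm

variable {M : Type*} [AddCommGroup M] {inter : M → M → ℤ}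

theorem inter_add_right (hsymm : ∀ x y, inter x y = inter y x)
    (haddl : ∀ x y z, inter (x + y) z = inter x z + inter y z) (x y z : M) :
    inter x (y + z) = inter x y + inter x z := by
  rw [hsymm, haddl, hsymm y, hsymm z]

theorem inter_add_self_of_forall_inter_eq_zero (hsymm : ∀ x y, inter x y = inter y x)
    (haddl : ∀ x y z, inter (x + y) z = inter x z + inter y z) {K : M}
    (hK : ∀ x, inter K x = 0) (x : M) : inter (x + K) (x + K) = inter x x := by
  rw [haddl, inter_add_right hsymm haddl, inter_add_right hsymm haddl, hK, hK, hsymm x K, hK]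
  ring

theorem inter_sum_nsmul_add_zsmul_of_pairwise (hsymm : ∀ x y, inter x y = inter y x)
    (haddl : ∀ x y z, inter (x + y) z = inter x z + inter y z) {ι : Type*} [Fintype ι]
    [DecidableEq ι] {E : ι → M} {j : ι} (hpair : ∀ i, j ≠ i → inter (E j) (E i) = 1)
    {E' : M} (hE' : inter (E j) E' = 1) {K : M} (hK : ∀ x, inter K x = 0)
    {a : ι → ℕ} (ha : a j = 0) (a0 : ℕ) (ε : ℤ) :
    inter (E j) (∑ i, a i • E i + a0 • E' + ε • K) = ∑ i, a i + a0 := by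
  let φ : M →+ ℤ := AddMonoidHom.mk' (inter (E j)) (inter_add_right hsymm haddl (E j))
  change φ _ = _
  rw [map_add, map_add, map_zsmul, map_nsmul,
    φ.map_sum_nsmul_eq_sum (fun i hi => hpair i hi.symm) ha]
  simp [φ, hE', hsymm (E j) K, hK]

theorem exists_isotropic_sum_eq_add_zsmul (hsymm : ∀ x y, inter x y = inter y x)
    (haddl : ∀ x y z, inter (x + y) z = inter x z + inter y z) {Eff : Set M} {K : M}
    (hK : ∀ x, inter K x = 0) {m : Multiset M}
    (hm : ∀ x ∈ m, (x ∈ Eff ∧ inter x x = 0) ∧ x + K ∈ Eff) {ε : ℤ} (hε : ε = 0 ∨ ε = 1)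
    (hpos : 0 < inter (m.sum + ε • K) (m.sum + ε • K)) :
    ∃ m' : Multiset M, (∀ x ∈ m', x ∈ Eff ∧ inter x x = 0) ∧ m'.sum = m.sum + ε • K ∧
      Multiset.card m' = Multiset.card m := by
  rcases hε with rfl | rfl
  · exact ⟨m, fun x hx => (hm x hx).1, by simp, rfl⟩
  have hm0 : m ≠ 0 := by
    rintro rfl
    simp [hK] at hpos
  rw [one_smul]
  exact Multiset.exists_card_eq_sum_eq_add_of_ne_zero hm0 (fun x hx => (hm x hx).1)
    fun x hx => ⟨(hm x hx).2,
      (inter_add_self_of_forall_inter_eq_zero hsymm haddl hK x).trans (hm x hx).1.2⟩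

end IntersectionForm

theorem phi_le_length_general
    (Pic : Type*) [AddCommGroup Pic]
    (inter : Pic → Pic → ℤ)
    (hsymm : ∀ x y, inter x y = inter y x)
    (haddl : ∀ x y z, inter (x + y) z = inter x z + inter y z)
    (Eff : Set Pic)
    (L : Pic) (hL2 : 0 < inter L L)
    (phiL : ℤ)
    (hphi : IsLeast {n : ℤ | ∃ E, E ∈ Eff ∧ E ≠ 0 ∧ inter E E = 0 ∧ n = inter E L} phiL)
    (lenL : ℕ)
    (hlen : IsGreatest {l : ℕ | ∃ E : Fin l → Pic,
        (∀ i, E i ∈ Eff ∧ inter (E i) (E i) = 0) ∧ L = ∑ i, E i} lenL)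
    -- fundamental presentation of L:
    (E : Fin 10 → Pic) (E910 K : Pic) (a : Fin 10 → ℤ) (a0 ε : ℤ)
    (hEeff : ∀ i, E i ∈ Eff) (hEne : ∀ i, E i ≠ 0)
    (hEiso : ∀ i, inter (E i) (E i) = 0)
    (hEpair : ∀ i j, i ≠ j → inter (E i) (E j) = 1)
    (hE910eff : E910 ∈ Eff) (hE910iso : inter E910 E910 = 0)
    (hE8E910 : inter (E 7) E910 = 1)
    (hKnum : ∀ x, inter K x = 0)
    (hKtwistE : ∀ i, E i + K ∈ Eff) (hKtwist910 : E910 + K ∈ Eff)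
    (hanneg : ∀ i, 0 ≤ a i) (ha0 : 0 ≤ a0) (ha8 : a 7 = 0)
    (hε : ε = 0 ∨ ε = 1)
    (hpres : L = (∑ i, a i • E i) + a0 • E910 + ε • K) :
    phiL ≤ (lenL : ℤ) := by
  lift a to Fin 10 → ℕ using hanneg
  lift a0 to ℕ using ha0
  simp only [natCast_zsmul] at hpres
  simp only [Nat.cast_eq_zero] at ha8
  set m : Multiset Pic := ∑ i, a i • {E i} + a0 • {E910}
  have hm_mem : ∀ x ∈ m, (x ∈ Eff ∧ inter x x = 0) ∧ x + K ∈ Eff := by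
    intro x hx
    simp only [m, Multiset.mem_add, Multiset.mem_sum, Multiset.mem_nsmul,
      Multiset.mem_singleton] at hx
    rcases hx with ⟨i, -, -, rfl⟩ | ⟨-, rfl⟩
    exacts [⟨⟨hEeff i, hEiso i⟩, hKtwistE i⟩, ⟨⟨hE910eff, hE910iso⟩, hKtwist910⟩]
  have hL_eq : L = m.sum + ε • K := by simp [hpres, m, Multiset.sum_sum, Multiset.sum_nsmul]
  have hE7L : inter (E 7) L = Multiset.card m := by
    rw [hpres, inter_sum_nsmul_add_zsmul_of_pairwise hsymm haddl (hEpair 7) hE8E910 hKnum ha8]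
    simp [m]
  obtain ⟨m', hm'_mem, hm'_sum, hm'_card⟩ :=
    exists_isotropic_sum_eq_add_zsmul hsymm haddl hKnum hm_mem hε (hL_eq ▸ hL2)
  calc phiL ≤ inter (E 7) L := hphi.2 ⟨E 7, hEeff 7, hEne 7, hEiso 7, rfl⟩
    _ = m'.card := by rw [hE7L, hm'_card]
    _ ≤ lenL := by
      exact_mod_cast Multiset.card_le_of_isGreatest hlen hm'_mem (hm'_sum.trans hL_eq.symm)

/-- On an Enriques surface (abstractly: its Picard/Num lattice with
intersection form `inter`, set of effective classes `Eff`), for an effective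
divisor `L` with `L² > 0` one has `φ(L) ≤ l(L)`, where `φ(L)` is the minimum of
`E·L` over effective nontrivial isotropic `E`, and `l(L)` is the maximal number
of effective isotropic divisors summing to `L`. The fundamental presentation of
`L` (Prop. 2.3/5.5 of [kn-JMPA]) is given as a hypothesis. -/
theorem phi_le_length
    (Pic : Type*) [AddCommGroup Pic]
    (inter : Pic → Pic → ℤ)
    (hsymm : ∀ x y, inter x y = inter y x)
    (haddl : ∀ x y z, inter (x + y) z = inter x z + inter y z)
    (hsmul : ∀ (k : ℤ) (x y : Pic), inter (k • x) y = k * inter x y)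
    (Eff : Set Pic)
    (L : Pic) (hL : L ∈ Eff) (hL2 : 0 < inter L L)
    (phiL : ℤ)
    (hphi : IsLeast {n : ℤ | ∃ E, E ∈ Eff ∧ E ≠ 0 ∧ inter E E = 0 ∧ n = inter E L} phiL)
    (lenL : ℕ)
    (hlen : IsGreatest {l : ℕ | ∃ E : Fin l → Pic,
        (∀ i, E i ∈ Eff ∧ inter (E i) (E i) = 0) ∧ L = ∑ i, E i} lenL)
    -- fundamental presentation of L:
    (E : Fin 10 → Pic) (E910 K : Pic) (a : Fin 10 → ℤ) (a0 ε : ℤ)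
    (hEeff : ∀ i, E i ∈ Eff) (hEne : ∀ i, E i ≠ 0)
    (hEiso : ∀ i, inter (E i) (E i) = 0)
    (hEpair : ∀ i j, i ≠ j → inter (E i) (E j) = 1)
    (hE910eff : E910 ∈ Eff) (hE910ne : E910 ≠ 0) (hE910iso : inter E910 E910 = 0)
    (hE8E910 : inter (E 7) E910 = 1)
    (hEiE910 : ∀ i : Fin 10, (i : ℕ) ≤ 7 → inter (E i) E910 = 1)
    (hKnum : ∀ x, inter K x = 0)
    (hKtwistE : ∀ i, E i + K ∈ Eff) (hKtwist910 : E910 + K ∈ Eff)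
    (hanneg : ∀ i, 0 ≤ a i) (ha0 : 0 ≤ a0) (ha8 : a 7 = 0)
    (hε : ε = 0 ∨ ε = 1)
    (hpres : L = (∑ i, a i • E i) + a0 • E910 + ε • K) :
    phiL ≤ (lenL : ℤ) :=
  phi_le_length_general Pic inter hsymm haddl Eff L hL2 phiL hphi lenL hlen E E910 K a a0 ε hEeff
    hEne hEiso hEpair hE910eff hE910iso hE8E910 hKnum hKtwistE hKtwist910 hanneg ha0 ha8 hε hpres
end

section
/- Let H be a divisor with H^2 > 0 on an Enriques surface, and C an irreducible curve with C^2 > 0 having a point of multiplicity m with (C·H)/m < φ(H). Then l(C) = m − 1, C^2 = m(m−1) − 2, p_g(C) = 0 and φ(C) = m − 1. -/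
/-- on an Enriques surface with `H² > 0`, if `C` is an irreducible
curve with `C² > 0` having a point of multiplicity `m` with `C·H/m < φ(H)`, then
`l(C) = m − 1`, `C² = m(m−1) − 2`, `p_g(C) = 0` and `φ(C) = m − 1`. -/
theorem positive_selfint_case
    (Pic : Type*) [AddCommGroup Pic]
    (inter : Pic → Pic → ℤ)
    (Eff : Set Pic)
    (H C : Pic) (hH2 : 0 < inter H H)
    (hC : C ∈ Eff) (hC2pos : 0 < inter C C)
    (phiH phiC : ℤ) (lenC : ℕ)
    (hphiHpos : 0 < phiH)
    (m pa pg : ℤ) (hm : 1 ≤ m) (hpg : 0 ≤ pg)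
    (hadj : 2 * pa = inter C C + 2)
    (hmult : m * (m - 1) + 2 * pg ≤ 2 * pa)
    -- decomposition of C into l(C) effective isotropic pieces gives C·H ≥ l(C)·φ(H):
    (hlenphi : (lenC : ℤ) * phiH ≤ inter C H)
    -- Lemma 2: C² ≤ l(C)² + l(C) − 2, with equality implying φ(C) = l(C):
    (hlenbound : inter C C ≤ (lenC : ℤ) ^ 2 + (lenC : ℤ) - 2)
    (heqcase : inter C C = (lenC : ℤ) ^ 2 + (lenC : ℤ) - 2 → phiC = (lenC : ℤ))
    -- (C·H)/m < φ(H):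
    (hless : inter C H < m * phiH) :
    (lenC : ℤ) = m - 1 ∧ inter C C = m * (m - 1) - 2 ∧ pg = 0 ∧ phiC = m - 1 := by
  set L : ℤ := (lenC : ℤ) with hLdef
  have hL0 : 0 ≤ L := Int.natCast_nonneg lenC
  have hLm : L < m := by
    by_contra h
    push_neg at h
    have : m * phiH ≤ L * phiH := by
      exact mul_le_mul_of_nonneg_right h (le_of_lt hphiHpos)
    linarith
  have hLeq : L = m - 1 := by nlinarith
  have hC2 : inter C C = m * (m - 1) - 2 := by nlinarith
  have hpg0 : pg = 0 := by nlinarith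
  refine ⟨hLeq, hC2, hpg0, ?_⟩
  have := heqcase (by nlinarith)
  omega
end
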